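/- arXiv:1506.00831 — 5 statements merged into one kernel-verified Lean document; each statement's English description precedes it below -/
import Mathlib

section
/- Let ε > 0 and μ be real constants. The curves γ^wk(t) = (μ/2, t, (μ/2)·t) and γ^st(t) = (1/2, t, (1/2)·t) in the variables (u, y, z) are exact solutions of the folded-node system ε·u̇ = (μ/2)y − (1+μ)z + 2zu, ẏ = 1, ż = u; that is, along each curve the left-hand sides of all three equations equal the right-hand sides identically in t. -/
/-- The weak primary canard `γ^wk(t) = (μ/2, t, (μ/2)t)` and the strong primary
canard `γ^st(t) = (1/2, t, (1/2)t)` are exact solutions of the folded-node system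
`εu̇ = (μ/2)y − (1+μ)z + 2zu`, `ẏ = 1`, `ż = u`. -/
theorem primary_canards_are_solutions (ε μ : ℝ) (hε : 0 < ε) :
    (∀ t : ℝ,
      ε * deriv (fun _ : ℝ => μ/2) t
        = μ/2 * t - (1+μ) * (μ/2 * t) + 2 * (μ/2 * t) * (μ/2) ∧
      deriv (fun s : ℝ => s) t = 1 ∧
      deriv (fun s : ℝ => μ/2 * s) t = μ/2) ∧
    (∀ t : ℝ,
      ε * deriv (fun _ : ℝ => (1:ℝ)/2) t
        = μ/2 * t - (1+μ) * (1/2 * t) + 2 * (1/2 * t) * (1/2) ∧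
      deriv (fun s : ℝ => s) t = 1 ∧
      deriv (fun s : ℝ => 1/2 * s) t = 1/2) := by
  have h : ∀ c t : ℝ, deriv (fun s : ℝ => c * s) t = c := fun c t => by
    simpa using (hasDerivAt_id t).const_mul c |>.deriv
  refine ⟨fun t => ⟨?_, ?_, ?_⟩, fun t => ⟨?_, ?_, ?_⟩⟩ <;>
    (try simp [h]) <;> try ring
end

section
/- Let ε > 0 and μ be real constants and let u, y, z : ℝ → ℝ be differentiable functions with u(t) < (1+μ)/2 for all t, satisfying the folded-node system ε·u̇ = (μ/2)y − (1+μ)z + 2zu, ẏ = 1, ż = u. Define w(t) = −(((1+μ)/2 − u(t))/ε)^ε (real power of a positive quantity), so that w(t) < 0. Then w is differentiable and (w, y, z) satisfies ẇ(t) = 2z(t)·w(t) + (μ·y(t)/(2ε))·|w(t)|^(1−1/ε), ẏ(t) = 1, ż(t) = −ε·|w(t)|^(1/ε) + (1+μ)/2 for all t. -/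
/-!
With `v = ((1+μ)/2 − u)/ε > 0` one has `w = −v^ε`, `|w|^(1/ε) = v` and `|w|^(1−1/ε) = v^(ε−1)`.
The chain rule gives `ẇ = v^(ε−1) u̇`, and substituting `u = (1+μ)/2 − εv` into the fast equation
collapses it to `u̇ = μy/(2ε) − 2zv`; likewise `ż = u = (1+μ)/2 − ε|w|^(1/ε)`.
-/

open Real

lemma abs_neg_rpow {v : ℝ} (hv : 0 < v) (p : ℝ) : |-(v ^ p)| = v ^ p := by
  rw [abs_neg, abs_of_pos (rpow_pos_of_pos hv p)]

lemma abs_neg_rpow_rpow_one_div {v ε : ℝ} (hv : 0 < v) (hε : ε ≠ 0) :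
    |-(v ^ ε)| ^ (1 / ε) = v := by
  rw [abs_neg_rpow hv, one_div, rpow_rpow_inv hv.le hε]

lemma abs_neg_rpow_rpow_one_sub_one_div {v ε : ℝ} (hv : 0 < v) (hε : ε ≠ 0) :
    |-(v ^ ε)| ^ (1 - 1 / ε) = v ^ (ε - 1) := by
  rw [abs_neg_rpow hv, ← rpow_mul hv.le, mul_one_sub, mul_one_div_cancel hε]

lemma hasDerivAt_neg_rpow_div_sub {u : ℝ → ℝ} {c ε t : ℝ} (hu : DifferentiableAt ℝ u t)
    (hε : ε ≠ 0) (hut : u t ≠ c) :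
    HasDerivAt (fun s => -(((c - u s) / ε) ^ ε)) (((c - u t) / ε) ^ (ε - 1) * deriv u t) t := by
  have hv : (c - u t) / ε ≠ 0 := div_ne_zero (sub_ne_zero.mpr hut.symm) hε
  have hdv : HasDerivAt (fun s => (c - u s) / ε) (-deriv u t / ε) t := by
    simpa using (hu.hasDerivAt.const_sub c).div_const ε
  have hdw : HasDerivAt (fun s => -(((c - u s) / ε) ^ ε)) _ t :=
    (hdv.rpow_const (p := ε) (Or.inl hv)).neg
  convert hdw using 1
  field_simp

lemma rpow_sub_one_mul_eq_of_fast_equation {ε μ v y z u' : ℝ} (hε : ε ≠ 0) (hv : 0 < v)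
    (hu' : ε * u' = μ / 2 * y - (1 + μ) * z + 2 * z * ((1 + μ) / 2 - ε * v)) :
    v ^ (ε - 1) * u' = 2 * z * -(v ^ ε) + μ * y / (2 * ε) * v ^ (ε - 1) := by
  have hu'_eq : u' = μ * y / (2 * ε) - 2 * z * v := by
    field_simp
    linarith
  have hv_pow : v ^ ε = v ^ (ε - 1) * v := by
    rw [← rpow_add_one hv.ne', sub_add_cancel]
  rw [hu'_eq, hv_pow]
  ring

theorem second_microscope_system_general (ε μ : ℝ) (hε : 0 < ε) (u y z : ℝ → ℝ)
    (hu : Differentiable ℝ u)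
    (hub : ∀ t, u t < (1+μ)/2)
    (hdu : ∀ t, ε * deriv u t = μ/2 * y t - (1+μ) * z t + 2 * z t * u t)
    (hdy : ∀ t, deriv y t = 1)
    (hdz : ∀ t, deriv z t = u t)
    (w : ℝ → ℝ) (hw : ∀ t, w t = -((((1+μ)/2 - u t) / ε) ^ ε)) :
    Differentiable ℝ w ∧
    ∀ t, w t < 0 ∧
      deriv w t = 2 * z t * w t + (μ * y t / (2*ε)) * |w t| ^ (1 - 1/ε) ∧
      deriv y t = 1 ∧
      deriv z t = -ε * |w t| ^ (1/ε) + (1+μ)/2 := by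
  set v : ℝ → ℝ := fun t => ((1+μ)/2 - u t) / ε with hv_def
  have hv : ∀ t, 0 < v t := fun t => div_pos (sub_pos.mpr (hub t)) hε
  have hu_eq : ∀ t, u t = (1+μ)/2 - ε * v t := fun t => by
    simp only [hv_def]
    field_simp
    ring
  have hw' : ∀ t, HasDerivAt w (v t ^ (ε - 1) * deriv u t) t := fun t => by
    rw [funext hw]
    exact hasDerivAt_neg_rpow_div_sub (hu t) hε.ne' (hub t).ne
  refine ⟨fun t => (hw' t).differentiableAt, fun t => ⟨?_, ?_, hdy t, ?_⟩⟩
  · rw [hw t, neg_neg_iff_pos]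
    exact rpow_pos_of_pos (hv t) ε
  · rw [(hw' t).deriv, hw t, abs_neg_rpow_rpow_one_sub_one_div (hv t) hε.ne']
    refine rpow_sub_one_mul_eq_of_fast_equation hε.ne' (hv t) ?_
    rw [hdu t, hu_eq t]
  · rw [hw t, abs_neg_rpow_rpow_one_div (hv t) hε.ne', hdz t, hu_eq t]
    ring

/-- The second microscope `w = ((u − (1+μ)/2)/ε)^[ε]` on the branch
`u < (1+μ)/2`, where `w = −(((1+μ)/2 − u)/ε)^ε < 0`: if `(u,y,z)` solves the
folded-node system `εu̇ = (μ/2)y − (1+μ)z + 2zu`, `ẏ = 1`, `ż = u`, then `w` is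
differentiable and `(w,y,z)` satisfies `ẇ = 2zw + (μy/(2ε))|w|^(1−1/ε)`,
`ẏ = 1`, `ż = −ε|w|^(1/ε) + (1+μ)/2`. -/
theorem second_microscope_system (ε μ : ℝ) (hε : 0 < ε) (u y z : ℝ → ℝ)
    (hu : Differentiable ℝ u) (hy : Differentiable ℝ y) (hz : Differentiable ℝ z)
    (hub : ∀ t, u t < (1+μ)/2)
    (hdu : ∀ t, ε * deriv u t = μ/2 * y t - (1+μ) * z t + 2 * z t * u t)
    (hdy : ∀ t, deriv y t = 1)
    (hdz : ∀ t, deriv z t = u t)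
    (w : ℝ → ℝ) (hw : ∀ t, w t = -((((1+μ)/2 - u t) / ε) ^ ε)) :
    Differentiable ℝ w ∧
    ∀ t, w t < 0 ∧
      deriv w t = 2 * z t * w t + (μ * y t / (2*ε)) * |w t| ^ (1 - 1/ε) ∧
      deriv y t = 1 ∧
      deriv z t = -ε * |w t| ^ (1/ε) + (1+μ)/2 :=
  second_microscope_system_general ε μ hε u y z hu hub hdu hdy hdz w hw
end

section
/- Let ε > 0 and μ be real constants. The curves t ↦ (−(2ε)^(−ε), t, (μ/2)·t) (the weak primary canard) and, assuming μ > 0, t ↦ (−(μ/(2ε))^ε, t, (1/2)·t) (the strong primary canard) are exact solutions of the second microscope system on the branch w < 0: ẇ = 2zw + (μy/(2ε))·|w|^(1−1/ε), ẏ = 1, ż = −ε·|w|^(1/ε) + (1+μ)/2. -/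
/-- In the second microscope coordinates, the weak primary canard
`t ↦ (−(2ε)^(−ε), t, (μ/2)t)` and (for `μ > 0`) the strong primary canard
`t ↦ (−(μ/(2ε))^ε, t, (1/2)t)` are exact solutions of the `w < 0` branch of the
second microscope system `ẇ = 2zw + (μy/(2ε))|w|^(1−1/ε)`, `ẏ = 1`,
`ż = −ε|w|^(1/ε) + (1+μ)/2`. -/
theorem primary_canards_second_microscope (ε μ : ℝ) (hε : 0 < ε) :
    (∀ t : ℝ,
      (-((2*ε) ^ (-ε)) : ℝ) < 0 ∧
      deriv (fun _ : ℝ => -((2*ε) ^ (-ε))) t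
        = 2 * (μ/2 * t) * (-((2*ε) ^ (-ε)))
          + (μ * t / (2*ε)) * |(-((2*ε) ^ (-ε)) : ℝ)| ^ (1 - 1/ε) ∧
      deriv (fun s : ℝ => s) t = 1 ∧
      deriv (fun s : ℝ => μ/2 * s) t
        = -ε * |(-((2*ε) ^ (-ε)) : ℝ)| ^ (1/ε) + (1+μ)/2) ∧
    (0 < μ → ∀ t : ℝ,
      (-((μ/(2*ε)) ^ ε) : ℝ) < 0 ∧
      deriv (fun _ : ℝ => -((μ/(2*ε)) ^ ε)) t
        = 2 * (1/2 * t) * (-((μ/(2*ε)) ^ ε))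
          + (μ * t / (2*ε)) * |(-((μ/(2*ε)) ^ ε) : ℝ)| ^ (1 - 1/ε) ∧
      deriv (fun s : ℝ => s) t = 1 ∧
      deriv (fun s : ℝ => (1:ℝ)/2 * s) t
        = -ε * |(-((μ/(2*ε)) ^ ε) : ℝ)| ^ (1/ε) + (1+μ)/2) := by
  have h2ε : (0:ℝ) < 2*ε := by linarith
  have hεne : ε ≠ 0 := ne_of_gt hε
  constructor
  · intro t
    have hw : (0:ℝ) < (2*ε) ^ (-ε) := Real.rpow_pos_of_pos h2ε _
    have habs : |(-((2*ε) ^ (-ε)) : ℝ)| = (2*ε) ^ (-ε) := by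
      rw [abs_neg, abs_of_pos hw]
    refine ⟨by linarith, ?_, ?_, ?_⟩
    · rw [habs, deriv_const, ← Real.rpow_mul (le_of_lt h2ε)]
      have h1 : (2*ε) ^ (-ε * (1 - 1/ε)) = (2*ε) * (2*ε) ^ (-ε) := by
        have he : -ε * (1 - 1/ε) = 1 + (-ε) := by field_simp; ring
        rw [he, Real.rpow_add h2ε, Real.rpow_one]
      rw [h1]
      field_simp
      ring
    · simp
    · have h2 : ((2*ε) ^ (-ε) : ℝ) ^ (1/ε) = (2*ε)⁻¹ := by
        rw [← Real.rpow_mul (le_of_lt h2ε)]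
        have he : -ε * (1/ε) = -1 := by field_simp
        rw [he, Real.rpow_neg_one]
      rw [habs, h2]
      have hd : deriv (fun s : ℝ => μ/2 * s) t = μ/2 := by
        simpa using ((hasDerivAt_id t).const_mul (μ/2)).deriv
      have hval : -ε * (2*ε)⁻¹ + (1+μ)/2 = μ/2 := by
        field_simp
        ring
      rw [hd, hval]
  · intro hμ t
    have ha : (0:ℝ) < μ/(2*ε) := div_pos hμ h2ε
    have hw : (0:ℝ) < (μ/(2*ε)) ^ ε := Real.rpow_pos_of_pos ha _
    have habs : |(-((μ/(2*ε)) ^ ε) : ℝ)| = (μ/(2*ε)) ^ ε := by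
      rw [abs_neg, abs_of_pos hw]
    refine ⟨by linarith, ?_, ?_, ?_⟩
    · rw [habs, deriv_const, ← Real.rpow_mul (le_of_lt ha)]
      have h1 : (μ/(2*ε)) ^ (ε * (1 - 1/ε)) = (μ/(2*ε)) ^ ε / (μ/(2*ε)) := by
        have he : ε * (1 - 1/ε) = ε - 1 := by field_simp
        rw [he, Real.rpow_sub ha, Real.rpow_one]
      rw [h1]
      field_simp
      ring
    · simp
    · have h2 : ((μ/(2*ε)) ^ ε : ℝ) ^ (1/ε) = μ/(2*ε) := by
        rw [← Real.rpow_mul (le_of_lt ha)]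
        have he : ε * (1/ε) = 1 := by field_simp
        rw [he, Real.rpow_one]
      rw [habs, h2]
      have hd : deriv (fun s : ℝ => (1:ℝ)/2 * s) t = 1/2 := by
        simpa using ((hasDerivAt_id t).const_mul ((1:ℝ)/2)).deriv
      have hval : -ε * (μ/(2*ε)) + (1+μ)/2 = 1/2 := by
        field_simp
        ring
      rw [hd, hval]
end

section
/- Let ε > 0 and μ be real constants and let W, y, z : ℝ → ℝ be differentiable functions with W(t) > −1 for all t, satisfying the W > 0 branch of the second pinched system: Ẇ = 2z·(W+1) + (μy/(2ε))·(W+1)^(1−1/ε), ẏ = 1, ż = ε·(W+1)^(1/ε) + (1+μ)/2 (real powers of W+1 > 0). Suppose at some time t₀ that W(t₀) = 0 and z(t₀) = −μ·y(t₀)/(4ε). Then Ẇ(t₀) = 0 and the derivative of Ẇ at t₀ equals (1 + 2ε)(μ + 2ε)/(2ε); in particular, if μ > 0 this second derivative is positive, so the flow in W > 0 curves away from the switching manifold at its tangency line z/y = −μ/(4ε). -/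
/-- At the tangency line `z/y = −μ/(4ε)` of the `W > 0` branch of the second
pinched system `Ẇ = 2z(W+1) + (μy/(2ε))(W+1)^(1−1/ε)`, `ẏ = 1`,
`ż = ε(W+1)^(1/ε) + (1+μ)/2`: if `W(t₀) = 0` and `z(t₀) = −μy(t₀)/(4ε)` then
`Ẇ(t₀) = 0` and `Ẅ(t₀) = (1+2ε)(μ+2ε)/(2ε)`, which is positive when `μ > 0`,
so the flow curves away from the switching manifold. -/
theorem second_pinch_upper_tangency (ε μ : ℝ) (hε : 0 < ε) (W y z : ℝ → ℝ)
    (hW : Differentiable ℝ W) (hy : Differentiable ℝ y) (hz : Differentiable ℝ z)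
    (hWb : ∀ t, -1 < W t)
    (hdW : ∀ t, deriv W t
        = 2 * z t * (W t + 1) + (μ * y t / (2*ε)) * (W t + 1) ^ (1 - 1/ε))
    (hdy : ∀ t, deriv y t = 1)
    (hdz : ∀ t, deriv z t = ε * (W t + 1) ^ (1/ε) + (1+μ)/2)
    (t₀ : ℝ) (hW0 : W t₀ = 0) (hz0 : z t₀ = -μ * y t₀ / (4*ε)) :
    deriv W t₀ = 0 ∧
    deriv (deriv W) t₀ = (1 + 2*ε) * (μ + 2*ε) / (2*ε) ∧
    (0 < μ → 0 < (1 + 2*ε) * (μ + 2*ε) / (2*ε)) := by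
  have hεne : ε ≠ 0 := ne_of_gt hε
  have hW1 : W t₀ + 1 ≠ 0 := by rw [hW0]; norm_num
  -- first derivative vanishes
  have h1 : deriv W t₀ = 0 := by
    rw [hdW t₀, hW0, hz0]
    simp [Real.one_rpow]
    field_simp
    ring
  refine ⟨h1, ?_, ?_⟩
  · -- second derivative
    have hWd : HasDerivAt W (deriv W t₀) t₀ := (hW t₀).hasDerivAt
    have hbase : HasDerivAt (fun t => W t + 1) (deriv W t₀) t₀ := hWd.add_const 1
    have hrpow : HasDerivAt (fun t => (W t + 1) ^ (1 - 1/ε))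
        (deriv W t₀ * (1 - 1/ε) * (W t₀ + 1) ^ (1 - 1/ε - 1)) t₀ :=
      hbase.rpow_const (Or.inl hW1)
    have hzd : HasDerivAt z (deriv z t₀) t₀ := (hz t₀).hasDerivAt
    have hyd : HasDerivAt y (deriv y t₀) t₀ := (hy t₀).hasDerivAt
    have hterm1 : HasDerivAt (fun t => 2 * z t * (W t + 1))
        (2 * deriv z t₀ * (W t₀ + 1) + 2 * z t₀ * deriv W t₀) t₀ :=
      (hzd.const_mul 2).mul hbase
    have hterm2 : HasDerivAt (fun t => (μ * y t / (2*ε)) * (W t + 1) ^ (1 - 1/ε))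
        ((μ * deriv y t₀ / (2*ε)) * (W t₀ + 1) ^ (1 - 1/ε)
          + (μ * y t₀ / (2*ε)) * (deriv W t₀ * (1 - 1/ε) * (W t₀ + 1) ^ (1 - 1/ε - 1))) t₀ := by
      have : HasDerivAt (fun t => μ * y t / (2*ε)) (μ * deriv y t₀ / (2*ε)) t₀ := by
        simpa [mul_div_assoc, mul_comm, mul_left_comm] using
          ((hyd.const_mul μ).div_const (2*ε))
      exact this.mul hrpow
    have hF : HasDerivAt (fun t => 2 * z t * (W t + 1)
          + (μ * y t / (2*ε)) * (W t + 1) ^ (1 - 1/ε))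
        (2 * deriv z t₀ * (W t₀ + 1) + 2 * z t₀ * deriv W t₀
          + ((μ * deriv y t₀ / (2*ε)) * (W t₀ + 1) ^ (1 - 1/ε)
            + (μ * y t₀ / (2*ε)) * (deriv W t₀ * (1 - 1/ε) * (W t₀ + 1) ^ (1 - 1/ε - 1)))) t₀ :=
      hterm1.add hterm2
    have heq : deriv W = fun t => 2 * z t * (W t + 1)
        + (μ * y t / (2*ε)) * (W t + 1) ^ (1 - 1/ε) := funext hdW
    rw [heq, hF.deriv, hdz t₀, hdy t₀, hW0, h1]
    simp [Real.one_rpow]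
    field_simp
    ring
  · intro hμ
    have h2 : 0 < (1 + 2*ε) := by linarith
    have h3 : 0 < (μ + 2*ε) := by linarith
    positivity
end

section
/- Let ε and μ be real constants with 0 < ε < 1/2 and let W, y, z : ℝ → ℝ be differentiable functions with W(t) < 1 for all t, satisfying the W < 0 branch of the second pinched system: Ẇ = −2z·(1−W) + (μy/(2ε))·(1−W)^(1−1/ε), ẏ = 1, ż = −ε·(1−W)^(1/ε) + (1+μ)/2 (real powers of 1−W > 0). Suppose at some time t₀ that W(t₀) = 0 and z(t₀) = μ·y(t₀)/(4ε). Then Ẇ(t₀) = 0 and the derivative of Ẇ at t₀ equals (1 − 2ε)(μ − 2ε)/(2ε); in particular this is negative if 0 < μ < 2ε (flow curving away from the switching manifold into W < 0) and positive if μ > 2ε (flow curving towards the switching manifold). -/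
/-! At `W = 0` the factor `1 − W` equals `1`, so every real power of it is `1` and the
`W`-component of the field reduces to `−2z + μy/(2ε)`, which vanishes on `z = μy/(4ε)`.
Differentiating along a trajectory, the terms carrying `Ẇ` drop out at the tangency point,
leaving `Ẅ = −2ż + μẏ/(2ε) = 2ε − 1 − μ + μ/(2ε) = (1 − 2ε)(μ − 2ε)/(2ε)`. -/

/-- The `W`-component of the `W < 0` branch of the second pinched system. -/
noncomputable def lowerPinchField (ε μ w y z : ℝ) : ℝ :=
  -2 * z * (1 - w) + (μ * y / (2 * ε)) * (1 - w) ^ (1 - 1 / ε)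

theorem lowerPinchField_eq_zero_of_tangency {ε : ℝ} (hε : ε ≠ 0) (μ y : ℝ) :
    lowerPinchField ε μ 0 y (μ * y / (4 * ε)) = 0 := by
  simp only [lowerPinchField, sub_zero, Real.one_rpow]
  field_simp
  ring

theorem HasDerivAt.lowerPinchField (ε μ : ℝ) {W y z : ℝ → ℝ} {W' y' z' t : ℝ}
    (hW : HasDerivAt W W' t) (hy : HasDerivAt y y' t) (hz : HasDerivAt z z' t)
    (hWt : W t ≠ 1) :
    HasDerivAt (fun s => lowerPinchField ε μ (W s) (y s) (z s))
      (-2 * z' * (1 - W t) + 2 * z t * W' + μ * y' / (2 * ε) * (1 - W t) ^ (1 - 1 / ε)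
        - μ * y t / (2 * ε) * (1 - 1 / ε) * (1 - W t) ^ (1 - 1 / ε - 1) * W') t := by
  have h1W : HasDerivAt (fun s => 1 - W s) (-W') t := hW.const_sub 1
  have hpow := h1W.rpow_const (p := 1 - 1 / ε) (Or.inl (sub_ne_zero.mpr hWt.symm))
  exact (((hz.const_mul (-2)).mul h1W).add
    (((hy.const_mul μ).div_const (2 * ε)).mul hpow)).congr_deriv (by ring)

theorem second_pinch_lower_tangency_general (ε μ : ℝ) (hε : 0 < ε) (hε' : ε < 1/2)
    (W y z : ℝ → ℝ)
    (hW : Differentiable ℝ W) (hy : Differentiable ℝ y) (hz : Differentiable ℝ z)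
    (hdW : ∀ t, deriv W t
        = -2 * z t * (1 - W t) + (μ * y t / (2*ε)) * (1 - W t) ^ (1 - 1/ε))
    (hdy : ∀ t, deriv y t = 1)
    (hdz : ∀ t, deriv z t = -ε * (1 - W t) ^ (1/ε) + (1+μ)/2)
    (t₀ : ℝ) (hW0 : W t₀ = 0) (hz0 : z t₀ = μ * y t₀ / (4*ε)) :
    deriv W t₀ = 0 ∧
    deriv (deriv W) t₀ = (1 - 2*ε) * (μ - 2*ε) / (2*ε) ∧
    (0 < μ → μ < 2*ε → deriv (deriv W) t₀ < 0) ∧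
    (2*ε < μ → 0 < deriv (deriv W) t₀) := by
  have hF : deriv W = fun t => lowerPinchField ε μ (W t) (y t) (z t) := funext hdW
  have hW' : deriv W t₀ = 0 := by
    rw [hdW, hW0, hz0]
    exact lowerPinchField_eq_zero_of_tangency hε.ne' μ (y t₀)
  have hW'' : deriv (deriv W) t₀ = (1 - 2*ε) * (μ - 2*ε) / (2*ε) := by
    have hd := (hW t₀).hasDerivAt.lowerPinchField ε μ (hy t₀).hasDerivAt (hz t₀).hasDerivAt
      (by rw [hW0]; norm_num)
    rw [hF, hd.deriv, hW', hdy, hdz, hW0, sub_zero, Real.one_rpow, Real.one_rpow]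
    field_simp
    ring
  refine ⟨hW', hW'', fun hμ hμε => ?_, fun hμε => ?_⟩ <;> rw [hW'']
  · exact div_neg_of_neg_of_pos (mul_neg_of_pos_of_neg (by linarith) (by linarith)) (by linarith)
  · exact div_pos (mul_pos (by linarith) (by linarith)) (by linarith)

/-- At the tangency line `z/y = μ/(4ε)` of the `W < 0` branch of the second
pinched system `Ẇ = −2z(1−W) + (μy/(2ε))(1−W)^(1−1/ε)`, `ẏ = 1`,
`ż = −ε(1−W)^(1/ε) + (1+μ)/2`: if `W(t₀) = 0` and `z(t₀) = μy(t₀)/(4ε)` then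
`Ẇ(t₀) = 0` and `Ẅ(t₀) = (1−2ε)(μ−2ε)/(2ε)`, which is negative if `0 < μ < 2ε`
(flow curving away into `W < 0`) and positive if `μ > 2ε` (flow curving towards
the switching manifold). -/
theorem second_pinch_lower_tangency (ε μ : ℝ) (hε : 0 < ε) (hε' : ε < 1/2)
    (W y z : ℝ → ℝ)
    (hW : Differentiable ℝ W) (hy : Differentiable ℝ y) (hz : Differentiable ℝ z)
    (hWb : ∀ t, W t < 1)
    (hdW : ∀ t, deriv W t
        = -2 * z t * (1 - W t) + (μ * y t / (2*ε)) * (1 - W t) ^ (1 - 1/ε))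
    (hdy : ∀ t, deriv y t = 1)
    (hdz : ∀ t, deriv z t = -ε * (1 - W t) ^ (1/ε) + (1+μ)/2)
    (t₀ : ℝ) (hW0 : W t₀ = 0) (hz0 : z t₀ = μ * y t₀ / (4*ε)) :
    deriv W t₀ = 0 ∧
    deriv (deriv W) t₀ = (1 - 2*ε) * (μ - 2*ε) / (2*ε) ∧
    (0 < μ → μ < 2*ε → deriv (deriv W) t₀ < 0) ∧
    (2*ε < μ → 0 < deriv (deriv W) t₀) :=
  second_pinch_lower_tangency_general ε μ hε hε' W y z hW hy hz hdW hdy hdz t₀ hW0 hz0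
end
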